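/- arXiv:1807.05417 — 3 statements merged into one kernel-verified Lean document; each statement's English description precedes it below -/
import Mathlib

section
/- Let (X,d,m) be a metric measure space, p ∈ [1,∞), and let D be a D-structure on (X,d,m). Then the Sobolev space W^{1,p}(X,d,m,D) is a Banach space when endowed with the norm ‖u‖_{W^{1,p}} := (‖u‖_{L^p(m)}^p + E_p(u))^{1/p}. -/
open Filter Set
open scoped ENNReal NNReal Topology

noncomputable section

namespace AxSob

variable {X : Type*} [MetricSpace X] [MeasurableSpace X]

/-- The quantity `∫_B |u|^p dm`. -/
def lpIntOn (m : MeasureTheory.Measure X) (p : ℝ) (u : X → ℝ) (B : Set X) : ℝ≥0∞ :=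
  ∫⁻ x in B, ENNReal.ofReal |u x| ^ p ∂m

/-- `u` belongs to `L^p(m)`. -/
def LpMem (m : MeasureTheory.Measure X) (p : ℝ) (u : X → ℝ) : Prop :=
  Measurable u ∧ lpIntOn m p u Set.univ < ∞

/-- `u` belongs to `L^p_loc(m)`: it is Borel and `p`-integrable on every bounded Borel set. -/
def LpLocMem (m : MeasureTheory.Measure X) (p : ℝ) (u : X → ℝ) : Prop :=
  Measurable u ∧ ∀ B : Set X, MeasurableSet B → Bornology.IsBounded B → lpIntOn m p u B < ∞

/-- Convergence in `L^p(m)`. -/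
def LpTendsto (m : MeasureTheory.Measure X) (p : ℝ) (g : ℕ → X → ℝ) (g₀ : X → ℝ) : Prop :=
  Tendsto (fun n => lpIntOn m p (fun x => g n x - g₀ x) Set.univ) atTop (𝓝 0)

/-- Convergence in `L^p_loc(m)`. -/
def LpLocTendsto (m : MeasureTheory.Measure X) (p : ℝ) (u : ℕ → X → ℝ) (u₀ : X → ℝ) : Prop :=
  ∀ B : Set X, MeasurableSet B → Bornology.IsBounded B →
    Tendsto (fun n => lpIntOn m p (fun x => u n x - u₀ x) B) atTop (𝓝 0)

/-- `u` belongs to `L^∞(m)`. -/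
def LinfMem (m : MeasureTheory.Measure X) (u : X → ℝ) : Prop :=
  Measurable u ∧ ∃ C : ℝ, ∀ᵐ x ∂m, |u x| ≤ C

/-- A `D`-structure (à la Gol'dshtein–Troyanov) on a metric measure space `(X, d, m)`,
with exponent `p`.  To every function `u` (thought of as an element of `L^p_loc(m)`) it
associates the family `D u` of its pseudo-gradients: non-negative Borel functions,
considered up to `m`-a.e. equality, satisfying the axioms A1–A5. -/
structure DStructure (X : Type*) [MetricSpace X] [MeasurableSpace X]
    (m : MeasureTheory.Measure X) (p : ℝ) where
  D : (X → ℝ) → Set (X → ℝ)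
  measurable_of_mem : ∀ u g, g ∈ D u → Measurable g
  nonneg_of_mem : ∀ u g, g ∈ D u → 0 ≤ g
  /-- `D` is defined on `L^p_loc(m)`, i.e. on `m`-a.e. equivalence classes. -/
  congr_ae : ∀ u v : X → ℝ, u =ᵐ[m] v → D u = D v
  /-- pseudo-gradients are considered up to `m`-a.e. equality. -/
  mem_congr_ae : ∀ u g h : X → ℝ, g ∈ D u → g =ᵐ[m] h → Measurable h → 0 ≤ h → h ∈ D u
  /-- A1 (non triviality). -/
  axiomA1 : ∀ (u : X → ℝ) (K : ℝ≥0), LpLocMem m p u → 0 ≤ u → LipschitzWith K u →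
    {x | 0 < u x}.indicator (fun _ => (K : ℝ)) ∈ D u
  /-- A2 (upper linearity). -/
  axiomA2 : ∀ (u₁ u₂ g₁ g₂ g : X → ℝ) (α₁ α₂ : ℝ),
    LpLocMem m p u₁ → LpLocMem m p u₂ → g₁ ∈ D u₁ → g₂ ∈ D u₂ →
    Measurable g → 0 ≤ g → (∀ᵐ x ∂m, |α₁| * g₁ x + |α₂| * g₂ x ≤ g x) →
    g ∈ D (fun x => α₁ * u₁ x + α₂ * u₂ x)
  /-- A3 (Leibniz rule). -/
  axiomA3 : ∀ (u g φ : X → ℝ) (K : ℝ≥0) (M : ℝ),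
    LpLocMem m p u → g ∈ D u → LipschitzWith K φ → (∀ x, |φ x| ≤ M) →
    (fun x => g x * M + (K : ℝ) * |u x|) ∈ D (fun x => φ x * u x)
  /-- A4 (lattice property). -/
  axiomA4 : ∀ u₁ u₂ g₁ g₂ : X → ℝ,
    LpLocMem m p u₁ → LpLocMem m p u₂ → g₁ ∈ D u₁ → g₂ ∈ D u₂ →
    (fun x => max (g₁ x) (g₂ x)) ∈ D (fun x => max (u₁ x) (u₂ x)) ∧
    (fun x => max (g₁ x) (g₂ x)) ∈ D (fun x => min (u₁ x) (u₂ x))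
  /-- A5 (completeness). -/
  axiomA5 : ∀ (u g : ℕ → X → ℝ) (u₀ g₀ : X → ℝ),
    (∀ n, LpLocMem m p (u n)) → (∀ n, g n ∈ D (u n)) → (∀ n, LpMem m p (g n)) →
    LpLocMem m p u₀ → Measurable g₀ → 0 ≤ g₀ →
    LpLocTendsto m p u u₀ → LpTendsto m p g g₀ → g₀ ∈ D u₀

namespace DStructure

variable {m : MeasureTheory.Measure X} {p : ℝ}

/-- The `p`-Dirichlet energy `E_p(u|B) = inf { ∫_B g^p dm : g ∈ D[u] }`. -/
def energyOn (S : DStructure X m p) (u : X → ℝ) (B : Set X) : ℝ≥0∞ :=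
  ⨅ (g : X → ℝ) (_ : g ∈ S.D u), lpIntOn m p g B

/-- The `p`-Dirichlet energy `E_p(u) = E_p(u|X)`. -/
def energy (S : DStructure X m p) (u : X → ℝ) : ℝ≥0∞ := S.energyOn u Set.univ

/-- The Sobolev class `S^p(X) = { u ∈ L^p_loc(m) : E_p(u) < ∞ }`. -/
def SobolevClass (S : DStructure X m p) : Set (X → ℝ) :=
  {u | LpLocMem m p u ∧ S.energy u < ∞}

/-- The Sobolev space `W^{1,p}(X) = L^p(m) ∩ S^p(X)`. -/
def W1p (S : DStructure X m p) : Set (X → ℝ) :=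
  {u | LpMem m p u ∧ S.energy u < ∞}

/-- The Sobolev norm `‖u‖ = (‖u‖_{L^p}^p + E_p(u))^{1/p}`. -/
def wNorm (S : DStructure X m p) (u : X → ℝ) : ℝ≥0∞ :=
  (lpIntOn m p u Set.univ + S.energy u) ^ (1 / p)

/-- `g` is the minimal pseudo-gradient of `u`: `g ∈ D[u] ∩ L^p(m)` and
`∫ g^p dm = E_p(u)`. -/
def IsMinimalPG (S : DStructure X m p) (u g : X → ℝ) : Prop :=
  g ∈ S.D u ∧ LpMem m p g ∧ lpIntOn m p g Set.univ = S.energy u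

/-- Property L1: if `u ∈ S^p(X)` is `m`-a.e. constant on a Borel set `B`, then
`E_p(u|B) = 0`. -/
def L1prop (S : DStructure X m p) : Prop :=
  ∀ u ∈ S.SobolevClass, ∀ B : Set X, MeasurableSet B →
    (∃ c : ℝ, ∀ᵐ x ∂(m.restrict B), u x = c) → S.energyOn u B = 0

/-- Property L2: if `u ∈ S^p(X)` is `m`-a.e. constant on a Borel set `B`, then the
minimal pseudo-gradient vanishes `m`-a.e. on `B`. -/
def L2prop (S : DStructure X m p) : Prop :=
  ∀ u ∈ S.SobolevClass, ∀ B : Set X, MeasurableSet B →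
    (∃ c : ℝ, ∀ᵐ x ∂(m.restrict B), u x = c) →
    ∀ g, S.IsMinimalPG u g → ∀ᵐ x ∂(m.restrict B), g x = 0

/-- Property L3: if `u ∈ S^p(X)` and `g ∈ D[u]`, then `χ_{u>0}·g ∈ D[u⁺]`. -/
def L3prop (S : DStructure X m p) : Prop :=
  ∀ u ∈ S.SobolevClass, ∀ g ∈ S.D u,
    {x | 0 < u x}.indicator g ∈ S.D (fun x => max (u x) 0)

/-- Property L4: if `u ∈ S^p(X)` and `g₁, g₂ ∈ D[u]`, then `min{g₁,g₂} ∈ D[u]`. -/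
def L4prop (S : DStructure X m p) : Prop :=
  ∀ u ∈ S.SobolevClass, ∀ g₁ ∈ S.D u, ∀ g₂ ∈ S.D u,
    (fun x => min (g₁ x) (g₂ x)) ∈ S.D u

/-- Property L5: the minimal pseudo-gradient satisfies `Du ≤ g` `m`-a.e. for every
`g ∈ D[u]`. -/
def L5prop (S : DStructure X m p) : Prop :=
  ∀ u ∈ S.SobolevClass, ∀ g, S.IsMinimalPG u g →
    ∀ h ∈ S.D u, ∀ᵐ x ∂m, g x ≤ h x

/-- A pointwise local `D`-structure: it satisfies L1 and L5. -/
def PointwiseLocal (S : DStructure X m p) : Prop := S.L1prop ∧ S.L5prop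

/-- Strong locality in the sense of Shanmugalingam. -/
def ShanmugalingamLocal (S : DStructure X m p) : Prop :=
  ∀ u₁ ∈ S.SobolevClass, ∀ u₂ ∈ S.SobolevClass, ∀ B : Set X, MeasurableSet B →
    (∀ᵐ x ∂(m.restrict B), u₁ x = u₂ x) →
    ∀ g₁ ∈ S.D u₁, ∀ g₂ ∈ S.D u₂,
      (fun x => B.indicator g₁ x + Bᶜ.indicator g₂ x) ∈ S.D u₂

/-- Strong locality in the sense of Timoshin. -/
def TimoshinLocal (S : DStructure X m p) : Prop :=
  ∀ u₁ ∈ S.SobolevClass, ∀ u₂ ∈ S.SobolevClass,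
    ∀ g₁ ∈ S.D u₁, ∀ g₂ ∈ S.D u₂,
      (fun x => {y | u₁ y < u₂ y}.indicator g₁ x + {y | u₂ y < u₁ y}.indicator g₂ x +
        {y | u₁ y = u₂ y}.indicator (fun y => min (g₁ y) (g₂ y)) x)
        ∈ S.D (fun x => min (u₁ x) (u₂ x))

end DStructure

end AxSob

/-!
`E_p^{1/p}` is subadditive by (A2) and `p`-homogeneous, so Minkowski's inequality in two-point
`ℓ^p` combines it with the `L^p` norm into a norm on `W^{1,p}`. For completeness, pass to a
subsequence `w_j` of a Cauchy sequence with `‖w_j - w_{j+1}‖ < 2^{-j}`. It converges in `L^p` to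
some `v`; choosing `g_k ∈ D[w_k - w_{k+1}]` with `‖g_k‖_p < 2^{-k}`, axiom (A5) applied to the
telescoping partial sums gives `∑_{k ≥ j} g_k ∈ D[w_j - v]`, so `E_p(w_j - v)^{1/p} ≤ 2^{1-j}`.
-/

namespace AxSob

open MeasureTheory

theorem Lp_add_le_two {p : ℝ} (hp : 1 ≤ p) (a b c d : ℝ≥0∞) :
    ((a + c) ^ p + (b + d) ^ p) ^ (1 / p) ≤
      (a ^ p + b ^ p) ^ (1 / p) + (c ^ p + d ^ p) ^ (1 / p) := by
  simpa [Fin.sum_univ_two] using ENNReal.Lp_add_le Finset.univ ![a, b] ![c, d] hp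

section Lp

variable {X : Type*} [MeasurableSpace X] {m : Measure X} {p : ℝ}

theorem lpIntOn_eq_eLpNorm'_rpow (hp : 0 < p) (u : X → ℝ) (B : Set X) :
    lpIntOn m p u B = eLpNorm' u p (m.restrict B) ^ p := by
  rw [eLpNorm'_eq_lintegral_enorm, ← ENNReal.rpow_mul, one_div_mul_cancel hp.ne', ENNReal.rpow_one]
  simp only [lpIntOn, Real.enorm_eq_ofReal_abs]

theorem lpIntOn_univ_eq_eLpNorm'_rpow (hp : 0 < p) (u : X → ℝ) :
    lpIntOn m p u univ = eLpNorm' u p m ^ p := by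
  rw [lpIntOn_eq_eLpNorm'_rpow hp, Measure.restrict_univ]

theorem lpIntOn_lt_top_iff (hp : 0 < p) {u : X → ℝ} {B : Set X} :
    lpIntOn m p u B < ∞ ↔ eLpNorm' u p (m.restrict B) < ∞ := by
  rw [lpIntOn_eq_eLpNorm'_rpow hp, ENNReal.rpow_lt_top_iff_of_pos hp]

theorem lpMem_iff (hp : 0 < p) {u : X → ℝ} :
    LpMem m p u ↔ Measurable u ∧ eLpNorm' u p m < ∞ := by
  rw [LpMem, lpIntOn_lt_top_iff hp, Measure.restrict_univ]

theorem lpIntOn_mono_set {u : X → ℝ} {B C : Set X} (h : B ⊆ C) :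
    lpIntOn m p u B ≤ lpIntOn m p u C :=
  lintegral_mono_set h

theorem lpIntOn_const_mul (hp : 0 < p) (c : ℝ) (u : X → ℝ) (B : Set X) :
    lpIntOn m p (fun x => c * u x) B = ENNReal.ofReal |c| ^ p * lpIntOn m p u B := by
  rw [lpIntOn, lpIntOn, ← lintegral_const_mul' _ _ (by finiteness)]
  simp only [abs_mul, ENNReal.ofReal_mul (abs_nonneg c), ENNReal.mul_rpow_of_nonneg _ _ hp.le]

theorem lpIntOn_add_lt_top (hp : 1 ≤ p) {u v : X → ℝ} (hu : Measurable u) (hv : Measurable v)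
    {B : Set X} (hu' : lpIntOn m p u B < ∞) (hv' : lpIntOn m p v B < ∞) :
    lpIntOn m p (fun x => u x + v x) B < ∞ := by
  have hp0 : 0 < p := one_pos.trans_le hp
  rw [lpIntOn_lt_top_iff hp0] at hu' hv' ⊢
  exact (eLpNorm'_add_le hu.aestronglyMeasurable hv.aestronglyMeasurable hp).trans_lt
    (ENNReal.add_lt_top.2 ⟨hu', hv'⟩)

theorem LpMem.add (hp : 1 ≤ p) {u v : X → ℝ} (hu : LpMem m p u) (hv : LpMem m p v) :
    LpMem m p (fun x => u x + v x) :=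
  ⟨hu.1.add hv.1, lpIntOn_add_lt_top hp hu.1 hv.1 hu.2 hv.2⟩

theorem LpMem.const_mul (hp : 0 < p) {u : X → ℝ} (hu : LpMem m p u) (c : ℝ) :
    LpMem m p (fun x => c * u x) := by
  refine ⟨hu.1.const_mul c, ?_⟩
  rw [lpIntOn_const_mul hp]
  exact ENNReal.mul_lt_top (by finiteness) hu.2

theorem LpMem.sub (hp : 1 ≤ p) {u v : X → ℝ} (hu : LpMem m p u) (hv : LpMem m p v) :
    LpMem m p (fun x => u x - v x) := by
  simpa [sub_eq_add_neg] using hu.add hp (hv.const_mul (one_pos.trans_le hp) (-1))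

theorem LpMem.zero (hp : 0 < p) : LpMem m p (fun _ : X => (0 : ℝ)) :=
  ⟨measurable_const, by simp [lpIntOn, ENNReal.zero_rpow_of_pos hp]⟩

theorem LpMem.sum (hp : 1 ≤ p) {f : ℕ → X → ℝ} (hf : ∀ k, LpMem m p (f k)) (N : ℕ) :
    LpMem m p (fun x => ∑ k ∈ Finset.range N, f k x) := by
  induction N with
  | zero => simpa using LpMem.zero (m := m) (one_pos.trans_le hp)
  | succ N ih => simpa only [Finset.sum_range_succ] using ih.add hp (hf N)

theorem eLpNorm_ofReal_eq_eLpNorm' (hp : 0 < p) (u : X → ℝ) :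
    eLpNorm u (ENNReal.ofReal p) m = eLpNorm' u p m := by
  rw [eLpNorm_eq_eLpNorm' (by simpa using hp) ENNReal.ofReal_ne_top, ENNReal.toReal_ofReal hp.le]

theorem LpMem.memLp (hp : 0 < p) {u : X → ℝ} (hu : LpMem m p u) : MemLp u (ENNReal.ofReal p) m :=
  ⟨hu.1.aestronglyMeasurable, by
    rw [eLpNorm_ofReal_eq_eLpNorm' hp]; exact ((lpMem_iff hp).1 hu).2⟩

theorem exists_lpMem_tendsto_eLpNorm' (hp : 1 ≤ p) {w : ℕ → X → ℝ} (hw : ∀ n, LpMem m p (w n))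
    {η : ℕ → ℝ≥0∞} (hη : ∑' k, η k ≠ ∞)
    (hcau : ∀ N n l, N ≤ n → N ≤ l → eLpNorm' (fun x => w n x - w l x) p m < η N) :
    ∃ v, LpMem m p v ∧ Tendsto (fun n => eLpNorm' (fun x => w n x - v x) p m) atTop (𝓝 0) := by
  have hp0 : 0 < p := one_pos.trans_le hp
  obtain ⟨v, hv, hlim⟩ := Lp.cauchy_complete_eLpNorm (by simpa using hp)
    (fun n => (hw n).memLp hp0) hη fun N n l hn hl => by
      rw [eLpNorm_ofReal_eq_eLpNorm' hp0]; exact hcau N n l hn hl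
  have hv_mk : v =ᵐ[m] hv.1.mk v := hv.1.ae_eq_mk
  refine ⟨hv.1.mk v, (lpMem_iff hp0).2 ⟨hv.1.stronglyMeasurable_mk.measurable, ?_⟩, ?_⟩
  · rw [← eLpNorm'_congr_ae hv_mk, ← eLpNorm_ofReal_eq_eLpNorm' hp0]
    exact hv.2
  · refine hlim.congr fun n => ?_
    rw [eLpNorm_ofReal_eq_eLpNorm' hp0]
    exact eLpNorm'_congr_ae (hv_mk.mono fun x hx => by simp [hx])

theorem lpTendsto_of_eLpNorm' (hp : 0 < p) {u : ℕ → X → ℝ} {u₀ : X → ℝ}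
    (h : Tendsto (fun n => eLpNorm' (fun x => u n x - u₀ x) p m) atTop (𝓝 0)) :
    LpTendsto m p u u₀ := by
  have := (ENNReal.continuous_rpow_const (y := p)).tendsto 0 |>.comp h
  rw [ENNReal.zero_rpow_of_pos hp] at this
  simpa only [LpTendsto, lpIntOn_univ_eq_eLpNorm'_rpow hp, Function.comp_def] using this

variable [MetricSpace X]

theorem LpMem.lpLocMem {u : X → ℝ} (hu : LpMem m p u) : LpLocMem m p u :=
  ⟨hu.1, fun _ _ _ => (lpIntOn_mono_set (subset_univ _)).trans_lt hu.2⟩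

theorem LpLocMem.add (hp : 1 ≤ p) {u v : X → ℝ} (hu : LpLocMem m p u) (hv : LpLocMem m p v) :
    LpLocMem m p (fun x => u x + v x) :=
  ⟨hu.1.add hv.1, fun B hB hBb => lpIntOn_add_lt_top hp hu.1 hv.1 (hu.2 B hB hBb) (hv.2 B hB hBb)⟩

theorem LpLocMem.const_mul (hp : 0 < p) {u : X → ℝ} (hu : LpLocMem m p u) (c : ℝ) :
    LpLocMem m p (fun x => c * u x) := by
  refine ⟨hu.1.const_mul c, fun B hB hBb => ?_⟩
  rw [lpIntOn_const_mul hp]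
  exact ENNReal.mul_lt_top (by finiteness) (hu.2 B hB hBb)

theorem LpLocMem.zero (hp : 0 < p) : LpLocMem m p (fun _ : X => (0 : ℝ)) :=
  (LpMem.zero hp).lpLocMem

theorem LpLocMem.sum (hp : 1 ≤ p) {f : ℕ → X → ℝ} (hf : ∀ k, LpLocMem m p (f k)) (N : ℕ) :
    LpLocMem m p (fun x => ∑ k ∈ Finset.range N, f k x) := by
  induction N with
  | zero => simpa using LpLocMem.zero (m := m) (one_pos.trans_le hp)
  | succ N ih => simpa only [Finset.sum_range_succ] using ih.add hp (hf N)

theorem LpTendsto.lpLocTendsto {u : ℕ → X → ℝ} {u₀ : X → ℝ} (h : LpTendsto m p u u₀) :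
    LpLocTendsto m p u u₀ := fun _ _ _ =>
  tendsto_of_tendsto_of_tendsto_of_le_of_le tendsto_const_nhds h (fun _ => zero_le)
    fun _ => lpIntOn_mono_set (subset_univ _)

end Lp

section Series

variable {α : Type*}

/-- Negative terms count as `0`, and where the series diverges the value is
`ENNReal.toReal ∞ = 0`. -/
def seriesSum (g : ℕ → α → ℝ) (x : α) : ℝ := (∑' k, ENNReal.ofReal (g k x)).toReal

theorem seriesSum_nonneg (g : ℕ → α → ℝ) : 0 ≤ seriesSum g := fun _ => ENNReal.toReal_nonneg

theorem seriesSum_eq_sum_add {g : ℕ → α → ℝ} (hg : ∀ k, 0 ≤ g k) {x : α}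
    (hx : ∑' k, ENNReal.ofReal (g k x) ≠ ∞) (N : ℕ) :
    seriesSum g x = ∑ k ∈ Finset.range N, g k x + seriesSum (fun k => g (k + N)) x := by
  have hsplit : ∑ k ∈ Finset.range N, ENNReal.ofReal (g k x) + ∑' k, ENNReal.ofReal (g (k + N) x)
      = ∑' k, ENNReal.ofReal (g k x) := ENNReal.summable.sum_add_tsum_nat_add'
  rw [← hsplit] at hx
  rw [seriesSum, seriesSum, ← hsplit, ENNReal.toReal_add (ne_top_of_le_ne_top hx le_self_add)
    (ne_top_of_le_ne_top hx le_add_self), ENNReal.toReal_sum fun k _ => ENNReal.ofReal_ne_top]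
  simp only [ENNReal.toReal_ofReal (hg _ x)]

variable [MeasurableSpace α] {μ : Measure α} {q : ℝ}

theorem eLpNorm'_tsum_le (hq : 1 ≤ q) {F : ℕ → α → ℝ≥0∞} (hF : ∀ k, Measurable (F k)) :
    eLpNorm' (fun x => ∑' k, F k x) q μ ≤ ∑' k, eLpNorm' (F k) q μ := by
  have hq0 : 0 < q := one_pos.trans_le hq
  set P : ℕ → α → ℝ≥0∞ := fun N x => ∑ k ∈ Finset.range N, F k x
  have hP : Monotone P := fun a b hab x =>
    Finset.sum_le_sum_of_subset (Finset.range_subset_range.2 hab)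
  have hsup : eLpNorm' (fun x => ∑' k, F k x) q μ = ⨆ N, eLpNorm' (P N) q μ := by
    simp only [eLpNorm'_eq_lintegral_enorm, enorm_eq_self, ENNReal.tsum_eq_iSup_nat]
    have hpow : ∀ x, (⨆ N, P N x) ^ q = ⨆ N, P N x ^ q := fun x =>
      (ENNReal.orderIsoRpow q hq0).map_iSup _
    rw [lintegral_congr hpow,
      lintegral_iSup (fun N => (Finset.measurable_sum _ fun k _ => hF k).pow_const q)
        fun a b hab x => ENNReal.rpow_le_rpow (hP hab x) hq0.le]
    exact (ENNReal.orderIsoRpow (1 / q) (by positivity)).map_iSup _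
  rw [hsup]
  refine iSup_le fun N => ?_
  calc eLpNorm' (P N) q μ ≤ ∑ k ∈ Finset.range N, eLpNorm' (F k) q μ := by
        simpa only [P, Finset.sum_fn] using
          eLpNorm'_sum_le (fun k _ => (hF k).aestronglyMeasurable) hq
    _ ≤ ∑' k, eLpNorm' (F k) q μ := ENNReal.sum_le_tsum _

theorem measurable_seriesSum {g : ℕ → α → ℝ} (hg : ∀ k, Measurable (g k)) :
    Measurable (seriesSum g) :=
  (Measurable.tsum fun k => (hg k).ennreal_ofReal).ennreal_toReal

theorem eLpNorm'_tsum_ofReal_le (hq : 1 ≤ q) {g : ℕ → α → ℝ} (hg : ∀ k, Measurable (g k)) :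
    eLpNorm' (fun x => ∑' k, ENNReal.ofReal (g k x)) q μ ≤ ∑' k, eLpNorm' (g k) q μ :=
  (eLpNorm'_tsum_le hq fun k => (hg k).ennreal_ofReal).trans <| ENNReal.tsum_le_tsum fun k =>
    eLpNorm'_mono_enorm_ae (zero_le_one.trans hq) (ae_of_all _ fun x => by
      simpa [Real.enorm_eq_ofReal_abs] using ENNReal.ofReal_le_ofReal (le_abs_self (g k x)))

theorem eLpNorm'_seriesSum_le (hq : 1 ≤ q) {g : ℕ → α → ℝ} (hg : ∀ k, Measurable (g k)) :
    eLpNorm' (seriesSum g) q μ ≤ ∑' k, eLpNorm' (g k) q μ :=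
  (eLpNorm'_mono_enorm_ae (zero_le_one.trans hq) (ae_of_all _ fun x => by
    simpa [seriesSum, Real.enorm_of_nonneg ENNReal.toReal_nonneg] using
      ENNReal.ofReal_toReal_le)).trans (eLpNorm'_tsum_ofReal_le hq hg)

theorem tendsto_eLpNorm'_sum_sub_seriesSum (hq : 1 ≤ q) {g : ℕ → α → ℝ}
    (hg : ∀ k, Measurable (g k)) (hg0 : ∀ k, 0 ≤ g k) (hfin : ∑' k, eLpNorm' (g k) q μ ≠ ∞) :
    Tendsto (fun N => eLpNorm' (fun x => ∑ k ∈ Finset.range N, g k x - seriesSum g x) q μ)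
      atTop (𝓝 0) := by
  have hq0 : 0 < q := one_pos.trans_le hq
  have hfinite : ∀ᵐ x ∂μ, ∑' k, ENNReal.ofReal (g k x) ≠ ∞ := by
    have h := (eLpNorm'_tsum_ofReal_le hq hg).trans_lt hfin.lt_top
    rw [eLpNorm'_eq_lintegral_enorm, ENNReal.rpow_lt_top_iff_of_pos (by positivity)] at h
    filter_upwards [ae_lt_top ((Measurable.tsum fun k => (hg k).ennreal_ofReal).pow_const q)
      h.ne] with x hx
    exact ((ENNReal.rpow_lt_top_iff_of_pos hq0).1 (by simpa only [enorm_eq_self] using hx)).ne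
  have hbound : ∀ N, eLpNorm' (fun x => ∑ k ∈ Finset.range N, g k x - seriesSum g x) q μ ≤
      ∑' k, eLpNorm' (g (k + N)) q μ := fun N =>
    (eLpNorm'_mono_enorm_ae hq0.le (hfinite.mono fun x hx => by
      rw [seriesSum_eq_sum_add hg0 hx N, sub_add_cancel_left, enorm_neg])).trans
      (eLpNorm'_seriesSum_le hq fun k => hg (k + N))
  exact tendsto_of_tendsto_of_tendsto_of_le_of_le tendsto_const_nhds
    (ENNReal.tendsto_sum_nat_add _ hfin) (fun _ => zero_le) hbound

end Series

namespace DStructure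

variable {X : Type*} [MetricSpace X] [MeasurableSpace X] {m : Measure X} {p : ℝ}
  (S : DStructure X m p) {u v g h : X → ℝ}

theorem add_mem_D_add (hu : LpLocMem m p u) (hv : LpLocMem m p v) (hg : g ∈ S.D u)
    (hh : h ∈ S.D v) : (fun x => g x + h x) ∈ S.D (fun x => u x + v x) := by
  simpa using S.axiomA2 u v g h (fun x => g x + h x) 1 1 hu hv hg hh
    ((S.measurable_of_mem _ _ hg).add (S.measurable_of_mem _ _ hh))
    (fun x => add_nonneg (S.nonneg_of_mem _ _ hg x) (S.nonneg_of_mem _ _ hh x))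
    (ae_of_all _ fun x => by simp)

theorem abs_mul_mem_D_mul (hu : LpLocMem m p u) (hg : g ∈ S.D u) (c : ℝ) :
    (fun x => |c| * g x) ∈ S.D (fun x => c * u x) := by
  simpa using S.axiomA2 u u g g (fun x => |c| * g x) c 0 hu hu hg hg
    ((S.measurable_of_mem _ _ hg).const_mul _)
    (fun x => mul_nonneg (abs_nonneg c) (S.nonneg_of_mem _ _ hg x))
    (ae_of_all _ fun x => by simp)

theorem zero_mem_D_zero (hp : 0 < p) : (fun _ => (0 : ℝ)) ∈ S.D (fun _ => 0) := by
  simpa using S.axiomA1 (fun _ => 0) 0 (LpLocMem.zero hp) le_rfl (LipschitzWith.const' 0)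

theorem sum_mem_D_sum (hp : 1 ≤ p) {d g : ℕ → X → ℝ} (hd : ∀ k, LpLocMem m p (d k))
    (hg : ∀ k, g k ∈ S.D (d k)) (N : ℕ) :
    (fun x => ∑ k ∈ Finset.range N, g k x) ∈ S.D (fun x => ∑ k ∈ Finset.range N, d k x) := by
  induction N with
  | zero => simpa using S.zero_mem_D_zero (one_pos.trans_le hp)
  | succ N ih =>
    simpa only [Finset.sum_range_succ] using
      S.add_mem_D_add (LpLocMem.sum hp hd N) (hd N) ih (hg N)

theorem energy_le (hg : g ∈ S.D u) : S.energy u ≤ lpIntOn m p g univ :=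
  iInf₂_le g hg

theorem energy_rpow_eq_iInf (hp : 0 < p) (u : X → ℝ) :
    S.energy u ^ (1 / p) = ⨅ g ∈ S.D u, eLpNorm' g p m := by
  let φ := ENNReal.orderIsoRpow (1 / p) (by positivity)
  calc S.energy u ^ (1 / p) = φ (⨅ g ∈ S.D u, eLpNorm' g p m ^ p) := by
        simp only [φ, ENNReal.orderIsoRpow_apply, energy, energyOn,
          lpIntOn_univ_eq_eLpNorm'_rpow hp]
    _ = ⨅ g ∈ S.D u, eLpNorm' g p m := by
        simp only [OrderIso.map_iInf, φ, ENNReal.orderIsoRpow_apply, one_div,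
          ENNReal.rpow_rpow_inv hp.ne']

theorem energy_rpow_le (hp : 0 < p) (hg : g ∈ S.D u) : S.energy u ^ (1 / p) ≤ eLpNorm' g p m :=
  (S.energy_rpow_eq_iInf hp u).trans_le (iInf₂_le g hg)

theorem energy_zero (hp : 0 < p) : S.energy (fun _ => 0) = 0 :=
  nonpos_iff_eq_zero.1 <| (S.energy_le (S.zero_mem_D_zero hp)).trans_eq <| by
    simp [lpIntOn, ENNReal.zero_rpow_of_pos hp]

theorem energy_congr_ae (h : u =ᵐ[m] v) : S.energy u = S.energy v := by
  simp only [energy, energyOn, S.congr_ae u v h]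

theorem energy_const_mul_le (hp : 0 < p) (hu : LpLocMem m p u) (c : ℝ) :
    S.energy (fun x => c * u x) ≤ ENNReal.ofReal |c| ^ p * S.energy u := by
  rcases eq_or_ne c 0 with rfl | hc
  · simp [S.energy_zero hp]
  have hK : ENNReal.ofReal |c| ^ p ≠ 0 :=
    (ENNReal.rpow_pos (by simpa using hc) ENNReal.ofReal_ne_top).ne'
  simp only [energy, energyOn, ENNReal.mul_iInf_of_ne hK (by finiteness)]
  refine le_iInf₂ fun g hg => ?_
  calc S.energyOn (fun x => c * u x) univ ≤ lpIntOn m p (fun x => |c| * g x) univ :=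
        S.energy_le (S.abs_mul_mem_D_mul hu hg c)
    _ = ENNReal.ofReal |c| ^ p * lpIntOn m p g univ := by rw [lpIntOn_const_mul hp, abs_abs]

theorem energy_const_mul (hp : 0 < p) (hu : LpLocMem m p u) (c : ℝ) :
    S.energy (fun x => c * u x) = ENNReal.ofReal |c| ^ p * S.energy u := by
  rcases eq_or_ne c 0 with rfl | hc
  · simp [S.energy_zero hp, ENNReal.zero_rpow_of_pos hp]
  refine (S.energy_const_mul_le hp hu c).antisymm ?_
  calc ENNReal.ofReal |c| ^ p * S.energy u
      = ENNReal.ofReal |c| ^ p * S.energy (fun x => c⁻¹ * (c * u x)) := by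
        simp only [inv_mul_cancel_left₀ hc]
    _ ≤ ENNReal.ofReal |c| ^ p * (ENNReal.ofReal |c⁻¹| ^ p * S.energy (fun x => c * u x)) :=
        mul_le_mul_right (S.energy_const_mul_le hp (hu.const_mul hp c) c⁻¹) _
    _ = S.energy (fun x => c * u x) := by
        rw [← mul_assoc, ← ENNReal.mul_rpow_of_nonneg _ _ hp.le,
          ← ENNReal.ofReal_mul (abs_nonneg _), ← abs_mul, mul_inv_cancel₀ hc]
        simp

theorem energy_rpow_add_le (hp : 1 ≤ p) (hu : LpLocMem m p u) (hv : LpLocMem m p v) :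
    S.energy (fun x => u x + v x) ^ (1 / p) ≤ S.energy u ^ (1 / p) + S.energy v ^ (1 / p) := by
  have hp0 : 0 < p := one_pos.trans_le hp
  rw [S.energy_rpow_eq_iInf hp0 u, S.energy_rpow_eq_iInf hp0 v]
  refine ENNReal.le_iInf₂_add_iInf₂ fun g hg h hh => ?_
  exact (S.energy_rpow_le hp0 (S.add_mem_D_add hu hv hg hh)).trans <|
    eLpNorm'_add_le (S.measurable_of_mem _ _ hg).aestronglyMeasurable
      (S.measurable_of_mem _ _ hh).aestronglyMeasurable hp

theorem seriesSum_mem_D (hp : 1 ≤ p) {d g : ℕ → X → ℝ} {s : X → ℝ}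
    (hd : ∀ k, LpLocMem m p (d k)) (hg : ∀ k, g k ∈ S.D (d k))
    (hfin : ∑' k, eLpNorm' (g k) p m ≠ ∞) (hs : LpLocMem m p s)
    (hds : LpLocTendsto m p (fun N x => ∑ k ∈ Finset.range N, d k x) s) :
    seriesSum g ∈ S.D s := by
  have hp0 : 0 < p := one_pos.trans_le hp
  have hgm : ∀ k, Measurable (g k) := fun k => S.measurable_of_mem _ _ (hg k)
  have hgLp : ∀ k, LpMem m p (g k) := fun k =>
    (lpMem_iff hp0).2 ⟨hgm k, (ENNReal.le_tsum k).trans_lt hfin.lt_top⟩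
  exact S.axiomA5 _ _ s (seriesSum g) (LpLocMem.sum hp hd) (S.sum_mem_D_sum hp hd hg)
    (LpMem.sum hp hgLp) hs (measurable_seriesSum hgm) (seriesSum_nonneg g) hds
    (lpTendsto_of_eLpNorm' hp0 <| tendsto_eLpNorm'_sum_sub_seriesSum hp hgm
      (fun k => S.nonneg_of_mem _ _ (hg k)) hfin)

theorem zero_mem_W1p (hp : 0 < p) : (fun _ => (0 : ℝ)) ∈ S.W1p :=
  ⟨LpMem.zero hp, by simp [S.energy_zero hp]⟩

theorem add_mem_W1p (hp : 1 ≤ p) (hu : u ∈ S.W1p) (hv : v ∈ S.W1p) :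
    (fun x => u x + v x) ∈ S.W1p := by
  have hp' : 0 < 1 / p := one_div_pos.2 (one_pos.trans_le hp)
  refine ⟨hu.1.add hp hv.1, (ENNReal.rpow_lt_top_iff_of_pos hp').1 ?_⟩
  refine (S.energy_rpow_add_le hp hu.1.lpLocMem hv.1.lpLocMem).trans_lt ?_
  exact ENNReal.add_lt_top.2 ⟨(ENNReal.rpow_lt_top_iff_of_pos hp').2 hu.2,
    (ENNReal.rpow_lt_top_iff_of_pos hp').2 hv.2⟩

theorem const_mul_mem_W1p (hp : 0 < p) (c : ℝ) (hu : u ∈ S.W1p) :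
    (fun x => c * u x) ∈ S.W1p := by
  refine ⟨hu.1.const_mul hp c, ?_⟩
  rw [S.energy_const_mul hp hu.1.lpLocMem]
  exact ENNReal.mul_lt_top (by finiteness) hu.2

theorem sub_mem_W1p (hp : 1 ≤ p) (hu : u ∈ S.W1p) (hv : v ∈ S.W1p) :
    (fun x => u x - v x) ∈ S.W1p := by
  simpa [sub_eq_add_neg] using
    S.add_mem_W1p hp hu (S.const_mul_mem_W1p (one_pos.trans_le hp) (-1) hv)

theorem wNorm_lt_top (hp : 0 < p) (hu : u ∈ S.W1p) : S.wNorm u < ∞ :=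
  ENNReal.rpow_lt_top_of_nonneg (by positivity) (ENNReal.add_lt_top.2 ⟨hu.1.2, hu.2⟩).ne

theorem wNorm_eq_zero_iff (hp : 0 < p) (hu : u ∈ S.W1p) :
    S.wNorm u = 0 ↔ u =ᵐ[m] fun _ => (0 : ℝ) := by
  have hI : lpIntOn m p u univ = 0 ↔ u =ᵐ[m] 0 := by
    rw [lpIntOn_univ_eq_eLpNorm'_rpow hp, ENNReal.rpow_eq_zero_iff_of_pos hp,
      eLpNorm'_eq_zero_iff hp hu.1.1.aestronglyMeasurable]
  rw [wNorm, ENNReal.rpow_eq_zero_iff_of_pos (by positivity), add_eq_zero, hI]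
  exact ⟨And.left, fun h => ⟨h, (S.energy_congr_ae h).trans (S.energy_zero hp)⟩⟩

theorem wNorm_const_mul (hp : 0 < p) (hu : LpLocMem m p u) (c : ℝ) :
    S.wNorm (fun x => c * u x) = ENNReal.ofReal |c| * S.wNorm u := by
  rw [wNorm, wNorm, lpIntOn_const_mul hp, S.energy_const_mul hp hu, ← mul_add,
    ENNReal.mul_rpow_of_nonneg _ _ (by positivity), ← ENNReal.rpow_mul, mul_one_div_cancel hp.ne',
    ENNReal.rpow_one]

theorem wNorm_add_le (hp : 1 ≤ p) (hu : LpLocMem m p u) (hv : LpLocMem m p v) :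
    S.wNorm (fun x => u x + v x) ≤ S.wNorm u + S.wNorm v := by
  have hp0 : 0 < p := one_pos.trans_le hp
  have hI : lpIntOn m p (fun x => u x + v x) univ ≤ (eLpNorm' u p m + eLpNorm' v p m) ^ p := by
    rw [lpIntOn_univ_eq_eLpNorm'_rpow hp0]
    gcongr
    exact eLpNorm'_add_le hu.1.aestronglyMeasurable hv.1.aestronglyMeasurable hp
  have hE : S.energy (fun x => u x + v x) ≤
      (S.energy u ^ (1 / p) + S.energy v ^ (1 / p)) ^ p := by
    rw [← ENNReal.rpow_inv_le_iff hp0, ← one_div]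
    exact S.energy_rpow_add_le hp hu hv
  calc S.wNorm (fun x => u x + v x)
      ≤ ((eLpNorm' u p m + eLpNorm' v p m) ^ p +
          (S.energy u ^ (1 / p) + S.energy v ^ (1 / p)) ^ p) ^ (1 / p) := by
        unfold wNorm; gcongr
    _ ≤ S.wNorm u + S.wNorm v := by
        refine (Lp_add_le_two hp _ _ _ _).trans_eq ?_
        simp only [wNorm, lpIntOn_univ_eq_eLpNorm'_rpow hp0, one_div, ENNReal.rpow_inv_rpow hp0.ne']

theorem wNorm_le_eLpNorm'_add_energy_rpow (hp : 1 ≤ p) (u : X → ℝ) :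
    S.wNorm u ≤ eLpNorm' u p m + S.energy u ^ (1 / p) := by
  have hp0 : 0 < p := one_pos.trans_le hp
  refine (ENNReal.rpow_add_le_add_rpow _ _ (by positivity)
    ((div_le_one hp0).2 hp)).trans_eq ?_
  rw [lpIntOn_univ_eq_eLpNorm'_rpow hp0, one_div, ENNReal.rpow_rpow_inv hp0.ne']

theorem eLpNorm'_le_wNorm (hp : 0 < p) (u : X → ℝ) : eLpNorm' u p m ≤ S.wNorm u := by
  calc eLpNorm' u p m = lpIntOn m p u univ ^ (1 / p) := by
        rw [lpIntOn_univ_eq_eLpNorm'_rpow hp, one_div, ENNReal.rpow_rpow_inv hp.ne']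
    _ ≤ S.wNorm u := by unfold wNorm; gcongr; exact le_self_add

theorem exists_mem_D_eLpNorm'_lt (hp : 0 < p) {r : ℝ≥0∞} (hu : S.wNorm u < r) :
    ∃ g ∈ S.D u, eLpNorm' g p m < r := by
  have h : S.energy u ^ (1 / p) < r :=
    (ENNReal.rpow_le_rpow le_add_self (by positivity)).trans_lt hu
  simpa only [S.energy_rpow_eq_iInf hp, iInf_lt_iff, exists_prop] using h

theorem energy_rpow_sub_le_tsum (hp : 1 ≤ p) {w : ℕ → X → ℝ} (hw : ∀ n, LpMem m p (w n))
    {v : X → ℝ} (hv : LpMem m p v)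
    (hlim : Tendsto (fun n => eLpNorm' (fun x => w n x - v x) p m) atTop (𝓝 0))
    {g : ℕ → X → ℝ} (hg : ∀ k, g k ∈ S.D (fun x => w k x - w (k + 1) x))
    (hfin : ∑' k, eLpNorm' (g k) p m ≠ ∞) (j : ℕ) :
    S.energy (fun x => w j x - v x) ^ (1 / p) ≤ ∑' k, eLpNorm' (g (k + j)) p m := by
  have hp0 : 0 < p := one_pos.trans_le hp
  have htel : ∀ N, (fun x => ∑ k ∈ Finset.range N, (w (k + j) x - w (k + j + 1) x) - (w j x - v x))
      = -fun x => w (N + j) x - v x := fun N => by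
    ext x
    have := Finset.sum_range_sub' (fun k => w (k + j) x) N
    simp only [add_right_comm _ 1 j, zero_add] at this
    simp only [this, Pi.neg_apply]
    ring
  have hmem := S.seriesSum_mem_D hp (s := fun x => w j x - v x)
    (fun k => ((hw (k + j)).sub hp (hw (k + j + 1))).lpLocMem) (fun k => hg (k + j))
    (ne_top_of_le_ne_top hfin (ENNReal.tsum_comp_le_tsum_of_injective (add_left_injective j) _))
    ((hw j).sub hp hv).lpLocMem (lpTendsto_of_eLpNorm' hp0 ?_).lpLocTendsto
  · exact (S.energy_rpow_le hp0 hmem).trans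
      (eLpNorm'_seriesSum_le hp fun k => S.measurable_of_mem _ _ (hg (k + j)))
  · simp only [htel, eLpNorm'_neg]
    exact hlim.comp (tendsto_add_atTop_nat j)

theorem exists_tendsto_wNorm_sub_of_rate (hp : 1 ≤ p) {w : ℕ → X → ℝ} (hw : ∀ n, w n ∈ S.W1p)
    {η : ℕ → ℝ≥0∞} (hη : ∑' k, η k ≠ ∞)
    (hcau : ∀ N n l, N ≤ n → N ≤ l → S.wNorm (fun x => w n x - w l x) < η N) :
    ∃ v ∈ S.W1p, Tendsto (fun n => S.wNorm (fun x => w n x - v x)) atTop (𝓝 0) := by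
  have hp0 : 0 < p := one_pos.trans_le hp
  obtain ⟨v, hv, hlim⟩ := exists_lpMem_tendsto_eLpNorm' hp (fun n => (hw n).1) hη
    fun N n l hn hl => (S.eLpNorm'_le_wNorm hp0 _).trans_lt (hcau N n l hn hl)
  choose g hg hgη using fun k => S.exists_mem_D_eLpNorm'_lt hp0 (hcau k k (k + 1) le_rfl k.le_succ)
  have hfin : ∑' k, eLpNorm' (g k) p m ≠ ∞ :=
    ne_top_of_le_ne_top hη (ENNReal.tsum_le_tsum fun k => (hgη k).le)
  have hE := S.energy_rpow_sub_le_tsum hp (fun n => (hw n).1) hv hlim hg hfin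
  have hsub : ∀ j, (fun x => w j x - v x) ∈ S.W1p := fun j =>
    ⟨(hw j).1.sub hp hv, (ENNReal.rpow_lt_top_iff_of_pos (by positivity)).1 <| (hE j).trans_lt <|
      (ne_top_of_le_ne_top hfin
        (ENNReal.tsum_comp_le_tsum_of_injective (add_left_injective j) _)).lt_top⟩
  refine ⟨v, by simpa using S.sub_mem_W1p hp (hw 0) (hsub 0), ?_⟩
  refine tendsto_of_tendsto_of_tendsto_of_le_of_le tendsto_const_nhds
    (by simpa using hlim.add (ENNReal.tendsto_sum_nat_add _ hfin)) (fun _ => zero_le) fun j => ?_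
  exact (S.wNorm_le_eLpNorm'_add_energy_rpow hp _).trans (add_le_add_right (hE j) _)

theorem exists_tendsto_wNorm_sub_of_cauchy (hp : 1 ≤ p) {u : ℕ → X → ℝ}
    (hu : ∀ n, u n ∈ S.W1p)
    (hcau : ∀ ε : ℝ≥0∞, 0 < ε → ∃ N : ℕ, ∀ n ≥ N, ∀ k ≥ N,
      S.wNorm (fun x => u n x - u k x) < ε) :
    ∃ v ∈ S.W1p, Tendsto (fun n => S.wNorm (fun x => u n x - v x)) atTop (𝓝 0) := by
  set η : ℕ → ℝ≥0∞ := fun k => 2⁻¹ ^ k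
  have hη : ∑' k, η k ≠ ∞ := by simp [η, ENNReal.tsum_geometric]
  obtain ⟨φ, hφ_mono, hφ⟩ := extraction_forall_of_eventually'
    (P := fun N k => ∀ n ≥ k, ∀ l ≥ k, S.wNorm (fun x => u n x - u l x) < η N) fun N => by
      obtain ⟨M, hM⟩ := hcau (η N) (ENNReal.pow_pos (by norm_num) N)
      exact ⟨M, fun k hk n hn l hl => hM n (hk.trans hn) l (hk.trans hl)⟩
  obtain ⟨v, hv, hlim⟩ := S.exists_tendsto_wNorm_sub_of_rate hp (fun n => hu (φ n)) hη
    fun N n l hn hl => hφ N _ (hφ_mono.monotone hn) _ (hφ_mono.monotone hl)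
  have hbound : ∀ j, ∀ n ≥ φ j, S.wNorm (fun x => u n x - v x) ≤
      η j + S.wNorm (fun x => u (φ j) x - v x) := fun j n hn =>
    calc S.wNorm (fun x => u n x - v x)
        = S.wNorm (fun x => (u n x - u (φ j) x) + (u (φ j) x - v x)) := by simp
      _ ≤ S.wNorm (fun x => u n x - u (φ j) x) + S.wNorm (fun x => u (φ j) x - v x) :=
          S.wNorm_add_le hp (S.sub_mem_W1p hp (hu n) (hu (φ j))).1.lpLocMem
            (S.sub_mem_W1p hp (hu (φ j)) hv).1.lpLocMem
      _ ≤ η j + S.wNorm (fun x => u (φ j) x - v x) := by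
          gcongr; exact (hφ j n hn (φ j) le_rfl).le
  have hsmall : Tendsto (fun j => η j + S.wNorm (fun x => u (φ j) x - v x)) atTop (𝓝 0) := by
    simpa using (ENNReal.tendsto_pow_atTop_nhds_zero_of_lt_one (by norm_num)).add hlim
  refine ⟨v, hv, ENNReal.tendsto_atTop_zero.2 fun ε hε => ?_⟩
  obtain ⟨j, hj⟩ := (hsmall.eventually (ge_mem_nhds hε)).exists
  exact ⟨φ j, fun n hn => (hbound j n hn).trans hj⟩

end DStructure

end AxSob

open AxSob AxSob.DStructure

theorem sobolev_space_is_banach_general {X : Type*} [MetricSpace X] [MeasurableSpace X]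
    (m : MeasureTheory.Measure X)
    (p : ℝ) (hp : 1 ≤ p) (S : DStructure X m p) :
    ((fun _ => (0 : ℝ)) ∈ S.W1p) ∧
    (∀ u ∈ S.W1p, ∀ v ∈ S.W1p, (fun x => u x + v x) ∈ S.W1p) ∧
    (∀ c : ℝ, ∀ u ∈ S.W1p, (fun x => c * u x) ∈ S.W1p) ∧
    (∀ u ∈ S.W1p, S.wNorm u < ∞) ∧
    (∀ u ∈ S.W1p, (S.wNorm u = 0 ↔ u =ᵐ[m] fun _ => (0 : ℝ))) ∧
    (∀ c : ℝ, ∀ u ∈ S.W1p, S.wNorm (fun x => c * u x) = ENNReal.ofReal |c| * S.wNorm u) ∧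
    (∀ u ∈ S.W1p, ∀ v ∈ S.W1p, S.wNorm (fun x => u x + v x) ≤ S.wNorm u + S.wNorm v) ∧
    (∀ u : ℕ → X → ℝ, (∀ n, u n ∈ S.W1p) →
      (∀ ε : ℝ≥0∞, 0 < ε → ∃ N : ℕ, ∀ n ≥ N, ∀ k ≥ N,
        S.wNorm (fun x => u n x - u k x) < ε) →
      ∃ v ∈ S.W1p, Filter.Tendsto (fun n => S.wNorm (fun x => u n x - v x))
        Filter.atTop (𝓝 0)) := by
  have hp0 : 0 < p := one_pos.trans_le hp
  exact ⟨S.zero_mem_W1p hp0,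
    fun u hu v hv => S.add_mem_W1p hp hu hv,
    fun c u hu => S.const_mul_mem_W1p hp0 c hu,
    fun u hu => S.wNorm_lt_top hp0 hu,
    fun u hu => S.wNorm_eq_zero_iff hp0 hu,
    fun c u hu => S.wNorm_const_mul hp0 hu.1.lpLocMem c,
    fun u hu v hv => S.wNorm_add_le hp hu.1.lpLocMem hv.1.lpLocMem,
    fun u hu hcau => S.exists_tendsto_wNorm_sub_of_cauchy hp hu hcau⟩

/-- Theorem 1.5 of Gol'dshtein–Troyanov: `W^{1,p}(X,d,m,D)` endowed with the norm
`‖u‖ = (‖u‖_{L^p}^p + E_p(u))^{1/p}` is a Banach space: it is a linear subspace,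
`wNorm` satisfies the axioms of a norm on it, and it is complete. -/
theorem sobolev_space_is_banach {X : Type*} [MetricSpace X] [CompleteSpace X]
    [TopologicalSpace.SeparableSpace X] [MeasurableSpace X] [BorelSpace X]
    (m : MeasureTheory.Measure X) (hm : m ≠ 0)
    (hball : ∀ (x : X) (r : ℝ), m (Metric.ball x r) < ∞)
    (p : ℝ) (hp : 1 ≤ p) (S : DStructure X m p) :
    ((fun _ => (0 : ℝ)) ∈ S.W1p) ∧
    (∀ u ∈ S.W1p, ∀ v ∈ S.W1p, (fun x => u x + v x) ∈ S.W1p) ∧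
    (∀ c : ℝ, ∀ u ∈ S.W1p, (fun x => c * u x) ∈ S.W1p) ∧
    (∀ u ∈ S.W1p, S.wNorm u < ∞) ∧
    (∀ u ∈ S.W1p, (S.wNorm u = 0 ↔ u =ᵐ[m] fun _ => (0 : ℝ))) ∧
    (∀ c : ℝ, ∀ u ∈ S.W1p, S.wNorm (fun x => c * u x) = ENNReal.ofReal |c| * S.wNorm u) ∧
    (∀ u ∈ S.W1p, ∀ v ∈ S.W1p, S.wNorm (fun x => u x + v x) ≤ S.wNorm u + S.wNorm v) ∧
    (∀ u : ℕ → X → ℝ, (∀ n, u n ∈ S.W1p) →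
      (∀ ε : ℝ≥0∞, 0 < ε → ∃ N : ℕ, ∀ n ≥ N, ∀ k ≥ N,
        S.wNorm (fun x => u n x - u k x) < ε) →
      ∃ v ∈ S.W1p, Filter.Tendsto (fun n => S.wNorm (fun x => u n x - v x))
        Filter.atTop (𝓝 0)) :=
  sobolev_space_is_banach_general m p hp S
end
end

section
/- Let (X,d,m) be a metric measure space, p ∈ (1,∞), and let D be a D-structure on (X,d,m) satisfying property L4. Then D satisfies property L5; that is, for every u ∈ S^p(X) and every g ∈ D[u], the inequality Du ≤ g holds m-a.e. on X. -/
open Filter Set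
open scoped ENNReal NNReal Topology

noncomputable section

open AxSob AxSob.DStructure

/-! By L4, `k = min{Du, g}` is again a pseudo-gradient of `u`. Since `k ≤ Du`, its energy is at
most `∫ (Du)^p = E_p(u)`, and at least `E_p(u)` by definition of the energy; two pointwise ordered
functions with the same finite `p`-integral agree a.e., so `Du = k ≤ g` a.e. -/

namespace AxSob

variable {X : Type*} [MeasurableSpace X] {m : MeasureTheory.Measure X} {p : ℝ}

theorem lpIntOn_mono (hp : 0 ≤ p) {f g : X → ℝ} (hfg : ∀ x, |f x| ≤ |g x|) (B : Set X) :
    lpIntOn m p f B ≤ lpIntOn m p g B :=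
  MeasureTheory.lintegral_mono fun x =>
    ENNReal.rpow_le_rpow (ENNReal.ofReal_le_ofReal (hfg x)) hp

theorem ae_abs_eq_of_abs_le_of_lpIntOn_le (hp : 0 < p) {f g : X → ℝ} (hg : LpMem m p g)
    (hfg : ∀ x, |f x| ≤ |g x|) (hgf : lpIntOn m p g univ ≤ lpIntOn m p f univ) :
    ∀ᵐ x ∂m, |f x| = |g x| := by
  have hf_fin : lpIntOn m p f univ ≠ ∞ :=
    ((lpIntOn_mono hp.le hfg univ).trans_lt hg.2).ne
  simp only [lpIntOn, MeasureTheory.Measure.restrict_univ] at hf_fin hgf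
  have hpow : (fun x => ENNReal.ofReal |f x| ^ p) =ᵐ[m] fun x => ENNReal.ofReal |g x| ^ p :=
    MeasureTheory.ae_eq_of_ae_le_of_lintegral_le
      (Eventually.of_forall fun x => ENNReal.rpow_le_rpow (ENNReal.ofReal_le_ofReal (hfg x)) hp.le)
      hf_fin (hg.1.abs.ennreal_ofReal.pow_const p).aemeasurable hgf
  filter_upwards [hpow] with x hx
  exact (ENNReal.ofReal_eq_ofReal_iff (abs_nonneg _) (abs_nonneg _)).mp
    (ENNReal.rpow_left_injective hp.ne' hx)

namespace DStructure

variable [MetricSpace X]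

theorem energy_le_lpIntOn (S : DStructure X m p) {u k : X → ℝ} (hk : k ∈ S.D u) :
    S.energy u ≤ lpIntOn m p k univ :=
  iInf₂_le k hk

theorem IsMinimalPG.ae_eq_of_mem_of_le (hp : 0 < p) {S : DStructure X m p} {u g k : X → ℝ}
    (hg : S.IsMinimalPG u g) (hk : k ∈ S.D u) (hkg : k ≤ g) : k =ᵐ[m] g := by
  have hk_nonneg := S.nonneg_of_mem u k hk
  have hg_nonneg := S.nonneg_of_mem u g hg.1
  have habs : ∀ x, |k x| = k x := fun x => abs_of_nonneg (hk_nonneg x)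
  have hgabs : ∀ x, |g x| = g x := fun x => abs_of_nonneg (hg_nonneg x)
  have hae := ae_abs_eq_of_abs_le_of_lpIntOn_le hp hg.2.1
    (fun x => by rw [habs, hgabs]; exact hkg x) (hg.2.2 ▸ S.energy_le_lpIntOn hk)
  filter_upwards [hae] with x hx
  rwa [habs, hgabs] at hx

end DStructure

end AxSob

theorem L4_implies_L5_general {X : Type*} [MetricSpace X] [MeasurableSpace X]
    (m : MeasureTheory.Measure X) (p : ℝ) (hp : 1 < p) (S : DStructure X m p)
    (hL4 : S.L4prop) : S.L5prop := by
  intro u hu g hg h hh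
  have hmin_mem : (fun x => min (g x) (h x)) ∈ S.D u := hL4 u hu g hg.1 h hh
  have hmin_eq := hg.ae_eq_of_mem_of_le (zero_lt_one.trans hp) hmin_mem fun x => min_le_left _ _
  filter_upwards [hmin_eq] with x hx
  exact hx ▸ min_le_right _ _

/-- Property L4 implies property L5. -/
theorem L4_implies_L5 {X : Type*} [MetricSpace X] [CompleteSpace X]
    [TopologicalSpace.SeparableSpace X] [MeasurableSpace X] [BorelSpace X]
    (m : MeasureTheory.Measure X) (hm : m ≠ 0)
    (hball : ∀ (x : X) (r : ℝ), m (Metric.ball x r) < ∞)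
    (p : ℝ) (hp : 1 < p) (S : DStructure X m p)
    (hL4 : S.L4prop) : S.L5prop :=
  L4_implies_L5_general m p hp S hL4
end
end

section
/- Let (X,d,m) be a metric measure space, p ∈ (1,∞), and let D be a D-structure on (X,d,m) satisfying properties L1 and L5. Then D satisfies property L2; that is, if B ⊆ X is Borel and u ∈ S^p(X) is m-a.e. constant on B, then the minimal pseudo-gradient Du vanishes m-a.e. on B. -/
open Filter Set
open scoped ENNReal NNReal Topology

noncomputable section

open AxSob AxSob.DStructure

namespace AxSob

open MeasureTheory

variable {X : Type*} [MeasurableSpace X] {m : Measure X} {p : ℝ}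

theorem lpIntOn_mono_ae {g h : X → ℝ} {B : Set X} (hp : 0 ≤ p)
    (hgh : ∀ᵐ x ∂m.restrict B, |g x| ≤ |h x|) : lpIntOn m p g B ≤ lpIntOn m p h B :=
  lintegral_mono_ae <| hgh.mono fun _ hx =>
    ENNReal.rpow_le_rpow (ENNReal.ofReal_le_ofReal hx) hp

theorem ae_eq_zero_of_lpIntOn_eq_zero {g : X → ℝ} {B : Set X} (hp : 0 < p)
    (hg : Measurable g) (h0 : lpIntOn m p g B = 0) : ∀ᵐ x ∂m.restrict B, g x = 0 := by
  have hmeas : Measurable fun x => ENNReal.ofReal |g x| ^ p :=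
    (ENNReal.measurable_ofReal.comp hg.abs).pow_const p
  filter_upwards [(lintegral_eq_zero_iff hmeas).mp h0] with x hx
  rcases ENNReal.rpow_eq_zero_iff.mp hx with ⟨habs, _⟩ | ⟨_, hneg⟩
  · simpa [ENNReal.ofReal_eq_zero] using habs
  · exact absurd hneg hp.not_gt

namespace DStructure

variable [MetricSpace X]

theorem lpIntOn_le_energyOn_of_isMinimalPG {S : DStructure X m p} (hL5 : S.L5prop)
    {u g : X → ℝ} (hu : u ∈ S.SobolevClass) (hg : S.IsMinimalPG u g) (hp : 0 ≤ p)
    (B : Set X) : lpIntOn m p g B ≤ S.energyOn u B := by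
  refine le_iInf₂ fun h hh => lpIntOn_mono_ae hp ?_
  have hg_nonneg := S.nonneg_of_mem u g hg.1
  filter_upwards [ae_restrict_of_ae (hL5 u hu g hg h hh)] with x hx
  rw [abs_of_nonneg (hg_nonneg x)]
  exact hx.trans (le_abs_self _)

end DStructure

end AxSob

theorem L1_and_L5_imply_L2_general {X : Type*} [MetricSpace X] [MeasurableSpace X]
    (m : MeasureTheory.Measure X)
    (p : ℝ) (hp : 1 < p) (S : DStructure X m p)
    (hL1 : S.L1prop) (hL5 : S.L5prop) : S.L2prop := by
  intro u hu B hB hconst g hg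
  have hp0 : 0 < p := zero_lt_one.trans hp
  have hzero : lpIntOn m p g B = 0 := le_antisymm
    ((lpIntOn_le_energyOn_of_isMinimalPG hL5 hu hg hp0.le B).trans_eq (hL1 u hu B hB hconst))
    bot_le
  exact ae_eq_zero_of_lpIntOn_eq_zero hp0 (S.measurable_of_mem u g hg.1) hzero

/-- Properties L1 and L5 together imply property L2. -/
theorem L1_and_L5_imply_L2 {X : Type*} [MetricSpace X] [CompleteSpace X]
    [TopologicalSpace.SeparableSpace X] [MeasurableSpace X] [BorelSpace X]
    (m : MeasureTheory.Measure X) (hm : m ≠ 0)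
    (hball : ∀ (x : X) (r : ℝ), m (Metric.ball x r) < ∞)
    (p : ℝ) (hp : 1 < p) (S : DStructure X m p)
    (hL1 : S.L1prop) (hL5 : S.L5prop) : S.L2prop :=
  L1_and_L5_imply_L2_general m p hp S hL1 hL5
end
end
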